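/- arXiv:2303.00227 — 4 statements merged into one kernel-verified Lean document; each statement's English description precedes it below -/
import Mathlib

section
/- For every integer n ≥ 1, every β ≥ 0, every h ∈ ℝ, and every t ≥ 0, the Curie-Weiss measure satisfies the concentration inequality π^n({x ∈ S : |m^n(x) − tanh(β(m^n(x) + h))| ≥ β/n + t/√n}) ≤ 2 exp(−t²/(4(1+β))). -/
/-!
Curie-Weiss model on S = {-1,1}^n, encoded via `Fin n → Bool` with spin
`true ↦ 1`, `false ↦ -1`.
-/

/-- Spin value of a coordinate. -/
noncomputable def spin (b : Bool) : ℝ := if b then 1 else -1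

/-- Magnetization `m^n(x) = (1/n) ∑ x_i`. -/
noncomputable def mag (n : ℕ) (x : Fin n → Bool) : ℝ :=
  (∑ i, spin (x i)) / n

/-- Hamiltonian `H^n(x) = -n (½ m^n(x)² + h m^n(x))`. -/
noncomputable def ham (n : ℕ) (h : ℝ) (x : Fin n → Bool) : ℝ :=
  -(n : ℝ) * ((1 / 2) * (mag n x) ^ 2 + h * mag n x)

/-- Partition function `Z_n = ∑_{x ∈ S} exp(-β H^n(x))`. -/
noncomputable def Zpart (n : ℕ) (β h : ℝ) : ℝ :=
  ∑ x : Fin n → Bool, Real.exp (-β * ham n h x)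

/-- Curie-Weiss probability of the event `{x ∈ S : P x}`:
`π^n(P) = (∑_{x : P x} exp(-β H^n(x))) / Z_n`. -/
noncomputable def cwProb (n : ℕ) (β h : ℝ) (P : (Fin n → Bool) → Prop) : ℝ :=
  (∑ x : Fin n → Bool,
    Set.indicator {y | P y} (fun y => Real.exp (-β * ham n h y)) x) / Zpart n β h

/-!
The proof follows Chatterjee's method of exchangeable pairs. Let `X ~ π` and let `X'` be obtained
from `X` by resampling a uniformly chosen spin from its conditional law given the others; the pair
`(X, X')` is exchangeable. For the antisymmetric `F(x, x') = ∑ i, (x_i - x'_i)` put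
`f(X) = E[F(X, X') | X]`. Exchangeability gives
`E[f e^{θ f}] = ½ E[F (e^{θ f(X)} - e^{θ f(X')})]`, and since `|F| ≤ 2` and
`|f(X) - f(X')| ≤ 2 (1 + β) / n`, the moment generating function `M` of `f` satisfies
`|M'(θ)| ≤ (2 (1 + β) / n) |θ| M(θ)`. Integrating this gives a Gaussian bound on `M` and hence, by
Chernoff, `π(|f| ≥ s) ≤ 2 exp(-n s² / (4 (1 + β)))`. Finally `f(x) = m - (1/n) ∑ i, tanh(β m_i)`
where the local fields `m_i` differ from `m + h` by `1/n`, so `f` is within `β / n` of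
`m - tanh(β (m + h))` because `tanh` is `1`-Lipschitz.
-/

open Real Finset

namespace Real

theorem hasDerivAt_tanh (x : ℝ) : HasDerivAt tanh (1 / cosh x ^ 2) x := by
  rw [show tanh = sinh / cosh from funext tanh_eq_sinh_div_cosh]
  exact ((hasDerivAt_sinh x).div (hasDerivAt_cosh x) (cosh_pos x).ne').congr_deriv
    (by rw [← cosh_sq_sub_sinh_sq x]; ring)

theorem lipschitzWith_tanh : LipschitzWith 1 tanh := by
  refine lipschitzWith_of_nnnorm_deriv_le (fun x => (hasDerivAt_tanh x).differentiableAt)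
    fun x => ?_
  rw [(hasDerivAt_tanh x).deriv, ← NNReal.coe_le_coe, coe_nnnorm, Real.norm_eq_abs,
    abs_of_pos (by positivity), NNReal.coe_one, div_le_one (by positivity)]
  nlinarith [one_le_cosh x]

theorem abs_tanh_sub_tanh_le (a b : ℝ) : |tanh a - tanh b| ≤ |a - b| := by
  simpa [Real.dist_eq] using lipschitzWith_tanh.dist_le_mul a b

theorem exp_sub_exp_eq_tanh_mul (a b : ℝ) :
    exp a - exp b = tanh ((a - b) / 2) * (exp a + exp b) := by
  have ha : exp a = exp ((a - b) / 2) * exp ((a + b) / 2) := by rw [← exp_add]; ring_nf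
  have hb : exp b = exp (-((a - b) / 2)) * exp ((a + b) / 2) := by rw [← exp_add]; ring_nf
  rw [tanh_eq_sinh_div_cosh, sinh_eq, cosh_eq, ha, hb]
  field_simp

theorem abs_exp_sub_exp_le (a b : ℝ) : |exp a - exp b| ≤ |a - b| * (exp a + exp b) / 2 := by
  have h := abs_tanh_sub_tanh_le ((a - b) / 2) 0
  rw [tanh_zero, sub_zero, sub_zero, abs_div, abs_two] at h
  rw [exp_sub_exp_eq_tanh_mul, abs_mul, abs_of_pos (by positivity : 0 < exp a + exp b)]
  calc _ ≤ |a - b| / 2 * (exp a + exp b) := by gcongr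
    _ = _ := by ring

end Real

section WeightedSums

variable {ι : Type*} [Fintype ι]

theorem abs_sum_mul_exp_le_of_involutive {φ : ι → ι} (hφ : Function.Involutive φ)
    {Q F G : ι → ℝ} {C : ℝ} (hQ : ∀ i, 0 ≤ Q i) (hQφ : ∀ i, Q (φ i) = Q i)
    (hFφ : ∀ i, F (φ i) = -F i) (hFG : ∀ i, |F i| * |G i - G (φ i)| ≤ 2 * C) (θ : ℝ) :
    |∑ i, Q i * F i * exp (θ * G i)| ≤ C * |θ| * ∑ i, Q i * exp (θ * G i) := by
  have reindex (H : ι → ℝ) : ∑ i, H (φ i) = ∑ i, H i := hφ.bijective.sum_comp H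
  have hpair : 2 * ∑ i, Q i * F i * exp (θ * G i)
      = ∑ i, Q i * F i * (exp (θ * G i) - exp (θ * G (φ i))) := by
    conv_lhs => rw [two_mul]; enter [2]; rw [← reindex]
    simp only [hQφ, hFφ, ← sum_add_distrib]
    exact sum_congr rfl fun i _ => by ring
  have hmass : ∑ i, Q i * exp (θ * G (φ i)) = ∑ i, Q i * exp (θ * G i) := by
    rw [← reindex fun i => Q i * exp (θ * G i)]
    simp only [hQφ]
  have hterm (i : ι) : |Q i * F i * (exp (θ * G i) - exp (θ * G (φ i)))|
      ≤ C * |θ| * (Q i * exp (θ * G i) + Q i * exp (θ * G (φ i))) := by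
    have hQi := hQ i
    have hexp := abs_exp_sub_exp_le (θ * G i) (θ * G (φ i))
    rw [← mul_sub, abs_mul θ] at hexp
    rw [abs_mul, abs_mul, abs_of_nonneg hQi]
    calc Q i * |F i| * |exp (θ * G i) - exp (θ * G (φ i))|
        ≤ Q i * |F i| * (|θ| * |G i - G (φ i)| * (exp (θ * G i) + exp (θ * G (φ i))) / 2) := by
          gcongr
      _ = Q i * (|F i| * |G i - G (φ i)|) * |θ| * (exp (θ * G i) + exp (θ * G (φ i))) / 2 := by
          ring
      _ ≤ Q i * (2 * C) * |θ| * (exp (θ * G i) + exp (θ * G (φ i))) / 2 := by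
          gcongr Q i * ?_ * |θ| * _ / 2
          exact hFG i
      _ = _ := by ring
  have h2 : 2 * |∑ i, Q i * F i * exp (θ * G i)| ≤ 2 * (C * |θ| * ∑ i, Q i * exp (θ * G i)) := by
    calc 2 * |∑ i, Q i * F i * exp (θ * G i)|
        = |∑ i, Q i * F i * (exp (θ * G i) - exp (θ * G (φ i)))| := by
          rw [← hpair, abs_mul, abs_two]
      _ ≤ ∑ i, C * |θ| * (Q i * exp (θ * G i) + Q i * exp (θ * G (φ i))) :=
          (abs_sum_le_sum_abs _ _).trans (sum_le_sum fun i _ => hterm i)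
      _ = _ := by rw [← mul_sum, sum_add_distrib, hmass]; ring
  linarith

theorem hasDerivAt_sum_mul_exp (w g : ι → ℝ) (θ : ℝ) :
    HasDerivAt (fun θ => ∑ i, w i * exp (θ * g i)) (∑ i, w i * g i * exp (θ * g i)) θ := by
  have hterm (i : ι) : HasDerivAt (fun θ => w i * exp (θ * g i)) (w i * g i * exp (θ * g i)) θ :=
    (((hasDerivAt_mul_const (g i)).exp).const_mul (w i)).congr_deriv (by ring)
  simpa using HasDerivAt.fun_sum fun i _ => hterm i

theorem sum_mul_exp_le_of_deriv_le {w g : ι → ℝ} {C : ℝ}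
    (hderiv : ∀ θ, 0 ≤ θ →
      ∑ i, w i * g i * exp (θ * g i) ≤ C * θ * ∑ i, w i * exp (θ * g i))
    {θ : ℝ} (hθ : 0 ≤ θ) :
    ∑ i, w i * exp (θ * g i) ≤ (∑ i, w i) * exp (C * θ ^ 2 / 2) := by
  set M := fun θ => ∑ i, w i * exp (θ * g i)
  -- `M' ≤ C θ M` says exactly that `N` is antitone on `[0, ∞)`.
  set N := fun θ => M θ * exp (-(C * θ ^ 2 / 2))
  have hN (θ : ℝ) : HasDerivAt N ((∑ i, w i * g i * exp (θ * g i) - C * θ * M θ)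
      * exp (-(C * θ ^ 2 / 2))) θ := by
    have hgauss : HasDerivAt (fun θ : ℝ => -(C * θ ^ 2 / 2)) (-(C * θ)) θ :=
      (((hasDerivAt_pow 2 θ).const_mul C).div_const 2).neg.congr_deriv (by ring)
    exact ((hasDerivAt_sum_mul_exp w g θ).mul hgauss.exp).congr_deriv (by ring)
  have hanti : AntitoneOn N (Set.Ici 0) := by
    refine antitoneOn_of_hasDerivWithinAt_nonpos (convex_Ici 0)
      (fun θ _ => (hN θ).continuousAt.continuousWithinAt)
      (fun θ _ => (hN θ).hasDerivWithinAt) fun θ hθ => ?_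
    rw [interior_Ici, Set.mem_Ioi] at hθ
    exact mul_nonpos_of_nonpos_of_nonneg (by linarith [hderiv θ hθ.le]) (exp_pos _).le
  have hN0 : N 0 = ∑ i, w i := by simp [N, M]
  calc M θ = N θ * exp (C * θ ^ 2 / 2) := by
        simp only [N, mul_assoc, ← exp_add, neg_add_cancel, exp_zero, mul_one]
    _ ≤ N 0 * exp (C * θ ^ 2 / 2) := by gcongr; exact hanti Set.self_mem_Ici hθ hθ
    _ = _ := by rw [hN0]

theorem sum_filter_le_exp_mul_sum_mul_exp {w g : ι → ℝ} (hw : ∀ i, 0 ≤ w i) {θ : ℝ}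
    (hθ : 0 ≤ θ) (s : ℝ) :
    ∑ i with s ≤ g i, w i ≤ exp (-(θ * s)) * ∑ i, w i * exp (θ * g i) := by
  rw [sum_filter, mul_sum]
  refine sum_le_sum fun i _ => ?_
  have hwi := hw i
  split_ifs with hs
  · calc w i = exp (-(θ * s)) * (w i * exp (θ * s)) := by
          rw [mul_left_comm, ← exp_add, neg_add_cancel, exp_zero, mul_one]
      _ ≤ exp (-(θ * s)) * (w i * exp (θ * g i)) := by gcongr
  · positivity

theorem sum_filter_le_mul_exp_of_deriv_le {w g : ι → ℝ} (hw : ∀ i, 0 ≤ w i) {C : ℝ}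
    (hC : 0 < C)
    (hderiv : ∀ θ, 0 ≤ θ →
      ∑ i, w i * g i * exp (θ * g i) ≤ C * θ * ∑ i, w i * exp (θ * g i))
    {s : ℝ} (hs : 0 ≤ s) :
    ∑ i with s ≤ g i, w i ≤ (∑ i, w i) * exp (-s ^ 2 / (2 * C)) := by
  have hθ : 0 ≤ s / C := div_nonneg hs hC.le
  calc ∑ i with s ≤ g i, w i ≤ exp (-(s / C * s)) * ∑ i, w i * exp (s / C * g i) :=
        sum_filter_le_exp_mul_sum_mul_exp hw hθ s
    _ ≤ exp (-(s / C * s)) * ((∑ i, w i) * exp (C * (s / C) ^ 2 / 2)) := by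
        gcongr
        exact sum_mul_exp_le_of_deriv_le hderiv hθ
    _ = (∑ i, w i) * exp (-s ^ 2 / (2 * C)) := by
        rw [mul_left_comm, ← exp_add]
        congr 2
        field_simp
        ring

theorem sum_filter_abs_le_two_mul_exp {w g : ι → ℝ} (hw : ∀ i, 0 ≤ w i) {C : ℝ}
    (hC : 0 < C)
    (hderiv : ∀ θ, |∑ i, w i * g i * exp (θ * g i)| ≤ C * |θ| * ∑ i, w i * exp (θ * g i))
    {s : ℝ} (hs : 0 ≤ s) :
    ∑ i with s ≤ |g i|, w i ≤ 2 * (∑ i, w i) * exp (-s ^ 2 / (2 * C)) := by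
  have hupper := sum_filter_le_mul_exp_of_deriv_le hw hC
    (fun θ hθ => by simpa [abs_of_nonneg hθ] using (le_abs_self _).trans (hderiv θ)) hs
  have hlower := sum_filter_le_mul_exp_of_deriv_le (g := fun i => -g i) hw hC
    (fun θ hθ => by
      have h := (neg_abs_le _).trans' (neg_le_neg (hderiv (-θ)))
      simp only [abs_neg, abs_of_nonneg hθ, neg_mul, mul_neg, sum_neg_distrib] at h ⊢
      linarith) hs
  calc ∑ i with s ≤ |g i|, w i ≤ ∑ i with s ≤ g i, w i + ∑ i with s ≤ -g i, w i := by
        simp only [sum_filter, ← sum_add_distrib]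
        refine sum_le_sum fun i _ => ?_
        have hwi := hw i
        split_ifs <;> cases abs_cases (g i) <;> linarith
    _ ≤ _ := by linarith

end WeightedSums

theorem abs_tanh_mul_sub_tanh_mul_le {β : ℝ} (hβ : 0 ≤ β) (a b : ℝ) :
    |tanh (β * a) - tanh (β * b)| ≤ β * |a - b| := by
  simpa [← mul_sub, abs_mul, abs_of_nonneg hβ] using abs_tanh_sub_tanh_le (β * a) (β * b)

theorem spin_sq (b : Bool) : spin b ^ 2 = 1 := by cases b <;> simp [spin]

theorem abs_spin (b : Bool) : |spin b| = 1 := by cases b <;> simp [spin]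

theorem abs_spin_sub_spin_le (a b : Bool) : |spin a - spin b| ≤ 2 := by
  cases a <;> cases b <;> norm_num [spin]

theorem sum_bool_exp_spin_mul (y : ℝ) : ∑ ε : Bool, exp (spin ε * y) = 2 * cosh y := by
  simp [spin, cosh_eq]
  ring

theorem sum_bool_spin_mul_exp_spin_mul (y : ℝ) :
    ∑ ε : Bool, spin ε * exp (spin ε * y) = 2 * sinh y := by
  simp [spin, sinh_eq]
  ring

section CurieWeiss

variable {n : ℕ} {β h : ℝ}

noncomputable def gibbsWeight (n : ℕ) (β h : ℝ) (x : Fin n → Bool) : ℝ :=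
  exp (-β * ham n h x)

/-- The field `(∑_{j ≠ i} x_j) / n + h` felt by spin `i`. -/
noncomputable def localField (n : ℕ) (h : ℝ) (x : Fin n → Bool) (i : Fin n) : ℝ :=
  mag n x + h - spin (x i) / n

/-- The conditional law of spin `i` given the others. -/
noncomputable def heatBath (n : ℕ) (β h : ℝ) (x : Fin n → Bool) (i : Fin n) (ε : Bool) : ℝ :=
  exp (spin ε * (β * localField n h x i)) / (2 * cosh (β * localField n h x i))

/-- Chatterjee's `f(x) = E[F(X, X') | X = x]`, where `X'` is obtained from `X` by resampling a
uniformly chosen spin from `heatBath` and `F(x, x') = ∑ i, (x_i - x'_i)`. -/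
noncomputable def drift (n : ℕ) (β h : ℝ) (x : Fin n → Bool) : ℝ :=
  (∑ i, (spin (x i) - tanh (β * localField n h x i))) / n

/-- The reversal `(x, x') ↦ (x', x)` of the exchangeable pair, where the triple `(x, i, ε)`
stands for the pair `(x, update x i ε)`. -/
def heatBathSwap (z : (Fin n → Bool) × Fin n × Bool) : (Fin n → Bool) × Fin n × Bool :=
  (Function.update z.1 z.2.1 z.2.2, z.2.1, z.1 z.2.1)

theorem heatBathSwap_involutive : Function.Involutive (heatBathSwap (n := n)) := by
  rintro ⟨x, i, ε⟩
  simp [heatBathSwap]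

theorem gibbsWeight_pos (x : Fin n → Bool) : 0 < gibbsWeight n β h x := exp_pos _

theorem heatBath_pos (x : Fin n → Bool) (i : Fin n) (ε : Bool) : 0 < heatBath n β h x i ε := by
  unfold heatBath
  positivity

theorem mag_update (x : Fin n → Bool) (i : Fin n) (ε : Bool) :
    mag n (Function.update x i ε) = mag n x + (spin ε - spin (x i)) / n := by
  have hsum : ∑ j, spin (Function.update x i ε j) = ∑ j, spin (x j) + (spin ε - spin (x i)) := by
    rw [← add_sum_erase _ _ (mem_univ i), ← add_sum_erase _ _ (mem_univ i),
      Function.update_self,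
      sum_congr rfl fun j hj => by rw [Function.update_of_ne (ne_of_mem_erase hj)]]
    ring
  rw [mag, mag, hsum, add_div]

theorem localField_update_self (x : Fin n → Bool) (i : Fin n) (ε : Bool) :
    localField n h (Function.update x i ε) i = localField n h x i := by
  simp only [localField, mag_update, Function.update_self]
  ring

theorem localField_update_of_ne (x : Fin n → Bool) {i j : Fin n} (hij : j ≠ i) (ε : Bool) :
    localField n h (Function.update x i ε) j = localField n h x j + (spin ε - spin (x i)) / n := by
  simp only [localField, mag_update, Function.update_of_ne hij]
  ring

theorem ham_update_sub (x : Fin n → Bool) (i : Fin n) (ε : Bool) :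
    ham n h (Function.update x i ε) - ham n h x = (spin (x i) - spin ε) * localField n h x i := by
  have hn : (n : ℝ) ≠ 0 := by exact_mod_cast i.pos.ne'
  have hsq : spin ε ^ 2 = spin (x i) ^ 2 := by rw [spin_sq, spin_sq]
  simp only [ham, localField, mag_update]
  field_simp
  linear_combination -hsq

theorem gibbsWeight_mul_heatBath_swap (x : Fin n → Bool) (i : Fin n) (ε : Bool) :
    gibbsWeight n β h (Function.update x i ε) * heatBath n β h (Function.update x i ε) i (x i)
      = gibbsWeight n β h x * heatBath n β h x i ε := by
  have hham := ham_update_sub (h := h) x i ε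
  simp only [gibbsWeight, heatBath, localField_update_self, mul_div_assoc', ← exp_add]
  congr 2
  linear_combination -β * hham

theorem sum_heatBath (x : Fin n → Bool) (i : Fin n) : ∑ ε, heatBath n β h x i ε = 1 := by
  simp only [heatBath, ← sum_div, sum_bool_exp_spin_mul]
  exact div_self (by positivity)

theorem sum_heatBath_mul_spin (x : Fin n → Bool) (i : Fin n) :
    ∑ ε, heatBath n β h x i ε * spin ε = tanh (β * localField n h x i) := by
  simp only [heatBath, div_mul_eq_mul_div, ← sum_div, mul_comm (exp _),
    sum_bool_spin_mul_exp_spin_mul, tanh_eq_sinh_div_cosh]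
  rw [mul_div_mul_left _ _ two_ne_zero]

theorem sum_heatBath_mul_spin_sub (x : Fin n → Bool) (i : Fin n) :
    ∑ ε, heatBath n β h x i ε * (spin (x i) - spin ε)
      = spin (x i) - tanh (β * localField n h x i) := by
  calc ∑ ε, heatBath n β h x i ε * (spin (x i) - spin ε)
      = spin (x i) * ∑ ε, heatBath n β h x i ε - ∑ ε, heatBath n β h x i ε * spin ε := by
        rw [mul_sum, ← sum_sub_distrib]
        exact sum_congr rfl fun ε _ => by ring
    _ = _ := by rw [sum_heatBath, sum_heatBath_mul_spin, mul_one]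

theorem natCast_mul_drift (x : Fin n → Bool) :
    n * drift n β h x = ∑ i, (spin (x i) - tanh (β * localField n h x i)) := by
  rcases n.eq_zero_or_pos with rfl | hn
  · simp
  · rw [drift, mul_div_cancel₀ _ (by positivity)]

theorem abs_drift_sub_le (hβ : 0 ≤ β) (hn : 0 < n) (x : Fin n → Bool) :
    |drift n β h x - (mag n x - tanh (β * (mag n x + h)))| ≤ β / n := by
  have hnR : (0 : ℝ) < n := by exact_mod_cast hn
  have hmag : ∑ i, spin (x i) = n * mag n x := by rw [mag, mul_div_cancel₀ _ hnR.ne']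
  have hdiff : drift n β h x - (mag n x - tanh (β * (mag n x + h)))
      = (∑ i, (tanh (β * (mag n x + h)) - tanh (β * localField n h x i))) / n := by
    rw [eq_div_iff hnR.ne', sub_mul, mul_comm, natCast_mul_drift, sum_sub_distrib,
      sum_sub_distrib, hmag, sum_const, card_univ, Fintype.card_fin, nsmul_eq_mul]
    ring
  have hterm (i : Fin n) :
      |tanh (β * (mag n x + h)) - tanh (β * localField n h x i)| ≤ β / n := by
    calc _ ≤ β * |mag n x + h - localField n h x i| := abs_tanh_mul_sub_tanh_mul_le hβ _ _
      _ = β / n := by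
        rw [localField, sub_sub_cancel, abs_div, abs_spin, Nat.abs_cast, mul_one_div]
  rw [hdiff, abs_div, Nat.abs_cast, div_le_div_iff_of_pos_right hnR]
  calc _ ≤ ∑ i, |tanh (β * (mag n x + h)) - tanh (β * localField n h x i)| :=
        abs_sum_le_sum_abs _ _
    _ ≤ ∑ _i : Fin n, β / n := sum_le_sum fun i _ => hterm i
    _ = β := by rw [sum_const, card_univ, Fintype.card_fin, nsmul_eq_mul, mul_div_cancel₀ _ hnR.ne']

theorem abs_drift_sub_drift_update_le (hβ : 0 ≤ β) (x : Fin n → Bool) (i : Fin n)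
    (ε : Bool) :
    |drift n β h x - drift n β h (Function.update x i ε)| ≤ 2 * (1 + β) / n := by
  have hnR : (0 : ℝ) < n := by exact_mod_cast i.pos
  have hterm (j : Fin n) :
      |(spin (x j) - tanh (β * localField n h x j))
        - (spin (Function.update x i ε j)
          - tanh (β * localField n h (Function.update x i ε) j))|
        ≤ (if j = i then 2 else 0) + 2 * β / n := by
    by_cases hj : j = i
    · subst hj
      rw [if_pos rfl, localField_update_self, sub_sub_sub_cancel_right]
      have hβn : 0 ≤ 2 * β / n := by positivity
      linarith [abs_spin_sub_spin_le (x j) (Function.update x j ε j)]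
    · rw [if_neg hj, zero_add, Function.update_of_ne hj, sub_sub_sub_cancel_left,
        localField_update_of_ne _ hj]
      calc _ ≤ β * |localField n h x j + (spin ε - spin (x i)) / n - localField n h x j| :=
            abs_tanh_mul_sub_tanh_mul_le hβ _ _
        _ ≤ β * (2 / n) := by
            rw [add_sub_cancel_left, abs_div, Nat.abs_cast]
            gcongr
            exact abs_spin_sub_spin_le ε (x i)
        _ = 2 * β / n := by ring
  rw [drift, drift, ← sub_div, ← sum_sub_distrib, abs_div, Nat.abs_cast,
    div_le_div_iff_of_pos_right hnR]
  calc _ ≤ ∑ j, ((if j = i then 2 else 0) + 2 * β / n) :=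
        (abs_sum_le_sum_abs _ _).trans (sum_le_sum fun j _ => hterm j)
    _ = 2 * (1 + β) := by
        rw [sum_add_distrib, sum_ite_eq', if_pos (mem_univ i), sum_const, card_univ,
          Fintype.card_fin, nsmul_eq_mul, mul_div_cancel₀ _ hnR.ne']
        ring

theorem le_abs_drift_of_le (hβ : 0 ≤ β) (hn : 0 < n) {x : Fin n → Bool} {s : ℝ}
    (hx : β / n + s ≤ |mag n x - tanh (β * (mag n x + h))|) : s ≤ |drift n β h x| := by
  have happrox := abs_drift_sub_le (h := h) hβ hn x
  have htriangle := abs_sub_abs_le_abs_sub (mag n x - tanh (β * (mag n x + h))) (drift n β h x)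
  rw [abs_sub_comm _ (drift n β h x)] at htriangle
  linarith

theorem sum_heatBath_pair (u : (Fin n → Bool) → ℝ) :
    ∑ z : (Fin n → Bool) × Fin n × Bool,
        gibbsWeight n β h z.1 * heatBath n β h z.1 z.2.1 z.2.2 * u z.1
      = n * ∑ x, gibbsWeight n β h x * u x := by
  rw [Fintype.sum_prod_type, mul_sum]
  refine sum_congr rfl fun x _ => ?_
  rw [Fintype.sum_prod_type]
  simp only [mul_right_comm _ _ (u x), ← mul_sum, sum_heatBath, mul_one, sum_const, card_univ,
    Fintype.card_fin, nsmul_eq_mul]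
  ring

theorem sum_heatBath_pair_mul_spin_sub (u : (Fin n → Bool) → ℝ) :
    ∑ z : (Fin n → Bool) × Fin n × Bool,
        gibbsWeight n β h z.1 * heatBath n β h z.1 z.2.1 z.2.2 * (spin (z.1 z.2.1) - spin z.2.2)
          * u z.1
      = n * ∑ x, gibbsWeight n β h x * drift n β h x * u x := by
  rw [Fintype.sum_prod_type, mul_sum]
  refine sum_congr rfl fun x _ => ?_
  rw [Fintype.sum_prod_type]
  calc _ = gibbsWeight n β h x * u x
        * ∑ i, ∑ ε, heatBath n β h x i ε * (spin (x i) - spin ε) := by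
        simp only [mul_sum]
        exact sum_congr rfl fun i _ => sum_congr rfl fun ε _ => by ring
    _ = _ := by
        simp only [sum_heatBath_mul_spin_sub, ← natCast_mul_drift]
        ring

theorem abs_sum_gibbsWeight_mul_drift_mul_exp_le (hβ : 0 ≤ β) (hn : 0 < n) (θ : ℝ) :
    |∑ x, gibbsWeight n β h x * drift n β h x * exp (θ * drift n β h x)|
      ≤ 2 * (1 + β) / n * |θ| * ∑ x, gibbsWeight n β h x * exp (θ * drift n β h x) := by
  have hnR : (0 : ℝ) < n := by exact_mod_cast hn
  have hsym := abs_sum_mul_exp_le_of_involutive heatBathSwap_involutive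
    (Q := fun z => gibbsWeight n β h z.1 * heatBath n β h z.1 z.2.1 z.2.2)
    (F := fun z => spin (z.1 z.2.1) - spin z.2.2) (G := fun z => drift n β h z.1)
    (fun z => (mul_pos (gibbsWeight_pos _) (heatBath_pos _ _ _)).le)
    (fun z => gibbsWeight_mul_heatBath_swap z.1 z.2.1 z.2.2)
    (fun z => by simp [heatBathSwap])
    (fun z => mul_le_mul (abs_spin_sub_spin_le _ _) (abs_drift_sub_drift_update_le hβ _ _ _)
      (abs_nonneg _) zero_le_two) θ
  rw [sum_heatBath_pair_mul_spin_sub fun x => exp (θ * drift n β h x),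
    sum_heatBath_pair fun x => exp (θ * drift n β h x), abs_mul, Nat.abs_cast,
    mul_left_comm] at hsym
  exact le_of_mul_le_mul_left hsym hnR

theorem cwProb_le_sum_filter_div {P Q : (Fin n → Bool) → Prop} [DecidablePred Q]
    (hPQ : ∀ x, P x → Q x) :
    cwProb n β h P ≤ (∑ x with Q x, gibbsWeight n β h x) / Zpart n β h := by
  classical
  have hsum : ∑ x with Q x, gibbsWeight n β h x
      = ∑ x, Set.indicator {y | Q y} (gibbsWeight n β h) x := by
    simp [sum_filter, Set.indicator_apply]
  rw [cwProb, hsum]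
  gcongr with x
  · exact sum_nonneg fun x _ => (gibbsWeight_pos x).le
  · exact Set.indicator_le_indicator_of_subset hPQ (fun y => (gibbsWeight_pos y).le) x

end CurieWeiss

/-- Chatterjee's concentration inequality: for every `n ≥ 1`, `β ≥ 0`,
`h ∈ ℝ` and `t ≥ 0`,
`π^n(|m^n - tanh(β(m^n + h))| ≥ β/n + t/√n) ≤ 2 exp(-t²/(4(1+β)))`. -/
theorem curieWeiss_concentration (n : ℕ) (hn : 1 ≤ n) (β : ℝ) (hβ : 0 ≤ β)
    (h : ℝ) (t : ℝ) (ht : 0 ≤ t) :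
    cwProb n β h
      (fun x => |mag n x - Real.tanh (β * (mag n x + h))| ≥ β / n + t / Real.sqrt n) ≤
    2 * Real.exp (-t ^ 2 / (4 * (1 + β))) := by
  have hnR : (0 : ℝ) < n := by exact_mod_cast hn
  have hZ : 0 < Zpart n β h := sum_pos (fun x _ => gibbsWeight_pos x) univ_nonempty
  have hexponent : -(t / √n) ^ 2 / (2 * (2 * (1 + β) / n)) = -t ^ 2 / (4 * (1 + β)) := by
    rw [div_pow, sq_sqrt hnR.le]
    field_simp
    ring
  calc cwProb n β h _ ≤ (∑ x with t / √n ≤ |drift n β h x|, gibbsWeight n β h x) / Zpart n β h :=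
        cwProb_le_sum_filter_div fun x hx => le_abs_drift_of_le hβ hn hx
    _ ≤ 2 * Zpart n β h * exp (-(t / √n) ^ 2 / (2 * (2 * (1 + β) / n))) / Zpart n β h := by
        gcongr
        exact sum_filter_abs_le_two_mul_exp (fun x => (gibbsWeight_pos x).le) (by positivity)
          (abs_sum_gibbsWeight_mul_drift_mul_exp_le hβ hn) (by positivity)
    _ = 2 * exp (-t ^ 2 / (4 * (1 + β))) := by
        rw [hexponent, mul_right_comm, mul_div_cancel_right₀ _ hZ.ne']
end

section
/- For every β > 1 and h > 0 there exists m₀ ∈ (0,1) such that m₀ = tanh(β(m₀ + h)) and m₀ ≥ m for every m ∈ (−1,1) satisfying m = tanh(β(m + h)); that is, the Curie-Weiss equation has a largest solution in (−1,1), and this largest solution is positive. -/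
open Real Set

lemma tanh_lt_one' (x : ℝ) : Real.tanh x < 1 := by
  rw [Real.tanh_eq_sinh_div_cosh, div_lt_one (Real.cosh_pos x)]
  exact Real.sinh_lt_cosh x

lemma neg_one_lt_tanh' (x : ℝ) : -1 < Real.tanh x := by
  have := tanh_lt_one' (-x)
  rw [Real.tanh_neg] at this
  linarith

lemma continuous_tanh' : Continuous Real.tanh := by
  have : Real.tanh = fun x => Real.sinh x / Real.cosh x := by
    funext x; exact Real.tanh_eq_sinh_div_cosh x
  rw [this]
  exact Real.continuous_sinh.div Real.continuous_cosh fun x => (Real.cosh_pos x).ne'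

lemma tanh_pos' {x : ℝ} (hx : 0 < x) : 0 < Real.tanh x := by
  rw [Real.tanh_eq_sinh_div_cosh]
  exact div_pos (Real.sinh_pos_iff.2 hx) (Real.cosh_pos x)

/-- for every `β > 1` and `h > 0` there exists `m₀ ∈ (0,1)` with
`m₀ = tanh(β(m₀ + h))` which dominates every solution of the Curie-Weiss equation
in `(-1,1)`; i.e. the Curie-Weiss equation has a largest solution in `(-1,1)`,
and this largest solution is positive. -/
theorem curieWeiss_largest_root_exists (β h : ℝ) (hβ : 1 < β) (hh : 0 < h) :
    ∃ m₀ ∈ Set.Ioo (0 : ℝ) 1, m₀ = Real.tanh (β * (m₀ + h)) ∧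
      ∀ m ∈ Set.Ioo (-1 : ℝ) 1, m = Real.tanh (β * (m + h)) → m ≤ m₀ := by
  have hβ0 : 0 < β := by linarith
  set S : Set ℝ := {m | m ∈ Set.Icc (-1 : ℝ) 1 ∧ m = Real.tanh (β * (m + h))} with hS
  -- find a root in (0,1) by IVT
  have hcont : Continuous fun m : ℝ => Real.tanh (β * (m + h)) - m :=
    (continuous_tanh'.comp (by continuity)).sub continuous_id
  have h0 : (0:ℝ) < Real.tanh (β * (0 + h)) - 0 := by
    simpa using tanh_pos' (by positivity : 0 < β * (0 + h))
  have h1 : Real.tanh (β * (1 + h)) - 1 < 0 := by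
    have := tanh_lt_one' (β * (1 + h)); linarith
  obtain ⟨c, hc, hceq⟩ : ∃ c ∈ Set.Ioo (0:ℝ) 1, Real.tanh (β * (c + h)) - c = 0 := by
    have := intermediate_value_Ioo' (le_of_lt one_pos) hcont.continuousOn
      (Set.mem_Ioo.2 ⟨h1, h0⟩)
    obtain ⟨c, hc, hceq⟩ := this
    exact ⟨c, hc, hceq⟩
  have hcS : c ∈ S := ⟨⟨by linarith [hc.1], hc.2.le⟩, by linarith⟩
  -- S is compact
  have hScl : IsClosed S := by
    have h1 : IsClosed {m : ℝ | m = Real.tanh (β * (m + h))} := by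
      have : {m : ℝ | m = Real.tanh (β * (m + h))}
          = {m : ℝ | Real.tanh (β * (m + h)) - m = 0} := by
        ext m; simp only [Set.mem_setOf_eq]; constructor <;> intro hx <;> linarith
      rw [this]
      exact isClosed_eq hcont continuous_const
    exact isClosed_Icc.inter h1
  have hScomp : IsCompact S := (isCompact_Icc).of_isClosed_subset hScl fun x hx => hx.1
  have hSne : S.Nonempty := ⟨c, hcS⟩
  have hsup : sSup S ∈ S := hScomp.sSup_mem hSne
  refine ⟨sSup S, ⟨?_, ?_⟩, hsup.2, ?_⟩
  · have := le_csSup hScomp.bddAbove hcS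
    linarith [hc.1]
  · have := hsup.2
    have := tanh_lt_one' (β * (sSup S + h))
    linarith
  · intro m hm hmeq
    exact le_csSup hScomp.bddAbove ⟨⟨hm.1.le, hm.2.le⟩, hmeq⟩
end

section
/- Suppose β > 1 and h > 0, and let m₀ ∈ (0,1) be the largest solution in (−1,1) of the Curie-Weiss equation m = tanh(β(m+h)). Then β < 1/(1 − m₀²). -/
/-!
Write `x = β(m₀ + h)`, so that `m₀ = tanh x` with `x > 0`. Since `h > 0`, `β < x / m₀ = x / tanh x`,
and `x / tanh x < cosh² x = 1 / (1 - m₀²)` because `x < sinh x ≤ sinh x cosh x` for `x > 0`.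
-/

/-- `m₀` is the largest solution in `(-1,1)` of the Curie-Weiss equation
`m = tanh(β(m+h))`, and it lies in `(0,1)`. -/
def IsLargestCWRoot (β h m₀ : ℝ) : Prop :=
  m₀ ∈ Set.Ioo (0 : ℝ) 1 ∧ m₀ = Real.tanh (β * (m₀ + h)) ∧
    ∀ m ∈ Set.Ioo (-1 : ℝ) 1, m = Real.tanh (β * (m + h)) → m ≤ m₀

namespace Real

theorem tanh_pos_iff {x : ℝ} : 0 < tanh x ↔ 0 < x := by
  rw [tanh_eq_sinh_div_cosh, div_pos_iff_of_pos_right (cosh_pos x), sinh_pos_iff]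

theorem one_sub_tanh_sq (x : ℝ) : 1 - tanh x ^ 2 = 1 / cosh x ^ 2 := by
  rw [tanh_eq_sinh_div_cosh, div_pow, one_sub_div (by positivity), cosh_sq_sub_sinh_sq]

theorem self_div_tanh_lt_cosh_sq {x : ℝ} (hx : 0 < x) : x / tanh x < cosh x ^ 2 := by
  have hsinh : 0 < sinh x := sinh_pos_iff.mpr hx
  rw [tanh_eq_sinh_div_cosh, div_div_eq_mul_div, div_lt_iff₀ hsinh]
  calc x * cosh x < sinh x * cosh x := by gcongr; exact self_lt_sinh_iff.mpr hx
    _ ≤ sinh x * cosh x * cosh x := le_mul_of_one_le_right (by positivity) (one_le_cosh x)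
    _ = cosh x ^ 2 * sinh x := by ring

end Real

open Real in
theorem curieWeiss_slope_general (β h m₀ : ℝ) (hh : 0 < h)
    (hm₀ : IsLargestCWRoot β h m₀) :
    β < 1 / (1 - m₀ ^ 2) := by
  obtain ⟨⟨hm₀_pos, -⟩, hfix, -⟩ := hm₀
  set x := β * (m₀ + h)
  have hx : 0 < x := tanh_pos_iff.mp (hfix ▸ hm₀_pos)
  have hβ : 0 < β := pos_of_mul_pos_left hx (by linarith)
  calc β < x / m₀ := by rw [lt_div_iff₀ hm₀_pos]; nlinarith [mul_pos hβ hh]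
    _ = x / tanh x := by rw [← hfix]
    _ < cosh x ^ 2 := self_div_tanh_lt_cosh_sq hx
    _ = 1 / (1 - m₀ ^ 2) := by rw [hfix, one_sub_tanh_sq, one_div_one_div]

/-- Lemma on slopes: if `β > 1`, `h > 0` and `m₀ ∈ (0,1)` is the largest
solution in `(-1,1)` of the Curie-Weiss equation, then `β < 1/(1 - m₀²)`. -/
theorem curieWeiss_slope (β h m₀ : ℝ) (hβ : 1 < β) (hh : 0 < h)
    (hm₀ : IsLargestCWRoot β h m₀) :
    β < 1 / (1 - m₀ ^ 2) :=
  curieWeiss_slope_general β h m₀ hh hm₀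
end

section
/- Suppose β > 1 and h > 0, and let m₀ ∈ (0,1) be the largest solution in (−1,1) of the Curie-Weiss equation m = tanh(β(m+h)). Then m₀ > m₁, where m₁ := √((β−1)/β). -/
open Real Set

namespace Real

@[fun_prop]
theorem continuous_tanh : Continuous tanh :=
  (continuous_sinh.div continuous_cosh fun x => (cosh_pos x).ne').congr fun x =>
    (tanh_eq_sinh_div_cosh x).symm

theorem tanh_strictMono : StrictMono tanh := fun a b hab => by
  have mem (x : ℝ) : tanh x ∈ Ioo (-1) 1 := ⟨neg_one_lt_tanh x, tanh_lt_one x⟩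
  rwa [← artanh_lt_artanh_iff (mem a) (mem b), artanh_tanh, artanh_tanh]

theorem artanh_lt_div_one_sub_sq {x : ℝ} (hx : x ∈ Ioo 0 1) : artanh x < x / (1 - x ^ 2) := by
  set t := artanh x
  have htanh : tanh t = x := tanh_artanh ⟨by linarith [hx.1], hx.2⟩
  have hcosh_ne : cosh t ≠ 0 := (cosh_pos t).ne'
  have hdiv : x / (1 - x ^ 2) = sinh (2 * t) / 2 := by
    rw [← htanh, tanh_eq_sinh_div_cosh, sinh_two_mul]
    field_simp
    rw [cosh_sq]
    ring
  rw [hdiv, lt_div_iff₀ two_pos, mul_comm]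
  exact self_lt_sinh_iff.2 (mul_pos two_pos (artanh_pos hx))

theorem lt_tanh_of_div_one_sub_sq_le {x s : ℝ} (hx : x ∈ Ioo 0 1) (hs : x / (1 - x ^ 2) ≤ s) :
    x < tanh s :=
  calc x = tanh (artanh x) := (tanh_artanh ⟨by linarith [hx.1], hx.2⟩).symm
    _ < tanh s := tanh_strictMono ((artanh_lt_div_one_sub_sq hx).trans_le hs)

end Real

theorem sqrt_sub_one_div_self_mem_Ioo {β : ℝ} (hβ : 1 < β) : √((β - 1) / β) ∈ Ioo 0 1 := by
  have hβ0 : 0 < β := one_pos.trans hβ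
  refine ⟨sqrt_pos.2 (div_pos (by linarith) hβ0), (sqrt_lt' one_pos).2 ?_⟩
  rw [one_pow, div_lt_one hβ0]
  linarith

theorem one_sub_sq_sqrt_sub_one_div_self {β : ℝ} (hβ : 1 ≤ β) : 1 - √((β - 1) / β) ^ 2 = β⁻¹ := by
  have hβ0 : 0 < β := one_pos.trans_le hβ
  rw [sq_sqrt (div_nonneg (by linarith) hβ0.le)]
  field_simp
  ring

theorem exists_curieWeiss_root_mem_Ioo {β h m : ℝ} (hm : m < tanh (β * (m + h))) :
    ∃ c ∈ Ioo m 1, c = tanh (β * (c + h)) := by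
  have hm1 : m < 1 := hm.trans (tanh_lt_one _)
  obtain ⟨c, hc, hfix⟩ := exists_mem_Icc_isFixedPt (f := fun m => tanh (β * (m + h)))
    (by fun_prop) hm1.le hm.le (tanh_lt_one _).le
  refine ⟨c, ⟨hc.1.lt_of_ne ?_, hc.2.lt_of_ne ?_⟩, hfix.symm⟩
  · rintro rfl
    exact hm.ne' hfix
  · rintro rfl
    exact (tanh_lt_one _).ne hfix

/-- if `β > 1`, `h > 0` and `m₀ ∈ (0,1)` is the largest solution in
`(-1,1)` of the Curie-Weiss equation, then `m₀ > m₁` where `m₁ := √((β-1)/β)`. -/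
theorem curieWeiss_root_gt_m1 (β h m₀ : ℝ) (hβ : 1 < β) (hh : 0 < h)
    (hm₀ : IsLargestCWRoot β h m₀) :
    m₀ > Real.sqrt ((β - 1) / β) := by
  obtain ⟨-, -, hmax⟩ := hm₀
  set m₁ := √((β - 1) / β)
  have hm₁ : m₁ ∈ Ioo 0 1 := sqrt_sub_one_div_self_mem_Ioo hβ
  have hm₁_lt : m₁ < tanh (β * (m₁ + h)) := by
    refine lt_tanh_of_div_one_sub_sq_le hm₁ ?_
    rw [one_sub_sq_sqrt_sub_one_div_self hβ.le, div_inv_eq_mul]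
    nlinarith [hm₁.1]
  obtain ⟨c, hc, hc_root⟩ := exists_curieWeiss_root_mem_Ioo hm₁_lt
  exact hc.1.trans_le (hmax c ⟨by linarith [hm₁.1, hc.1], hc.2⟩ hc_root)
end
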